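/- arXiv:math/0609003 — 3 statements merged into one kernel-verified Lean document; each statement's English description precedes it below -/
import Mathlib

section
/- Let $R$ be an irreducible root system in a rational vector space $L$ that it spans. Then for every nonzero linear function $l \in L^*$ there exists a Weyl chamber $C \subset L$ of $R$ such that the closure $\overline{C}$ satisfies $\overline{C} \subset \{x \mid l(x) \geq 0\}$ and $\overline{C} \cap \{x \mid l(x) = 0\} = \{0\}$; in other words, $l$ is strictly positive on $\overline{C} \setminus \{0\}$. -/
/-- An irreducible reduced (crystallographic) root system spanning a rational
vector space `L`, encoded via its finite set of roots and the coroot pairing. -/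
structure RootSystemData (L : Type*) [AddCommGroup L] [Module ℚ L] where
  roots : Finset L
  coroot : L → (L →ₗ[ℚ] ℚ)
  ne_zero : ∀ α ∈ roots, α ≠ 0
  span_eq_top : Submodule.span ℚ (roots : Set L) = ⊤
  coroot_self : ∀ α ∈ roots, coroot α α = 2
  coroot_int : ∀ α ∈ roots, ∀ β ∈ roots, ∃ n : ℤ, coroot α β = (n : ℚ)
  reflect_mem : ∀ α ∈ roots, ∀ β ∈ roots, β - coroot α β • α ∈ roots
  reduced : ∀ α ∈ roots, ∀ c : ℚ, c • α ∈ roots → c = 1 ∨ c = -1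
  irreducible : ∀ S : Finset L, S ⊆ roots → S.Nonempty →
    (∃ β ∈ roots, β ∉ S) → ∃ α ∈ S, ∃ β ∈ roots, β ∉ S ∧ coroot α β ≠ 0

/-- `Δ` is a base (system of simple roots) of the root system `R`:
a linearly independent set of roots such that every root is a nonnegative or
nonpositive integer combination of elements of `Δ`. -/
def IsBase {L : Type*} [AddCommGroup L] [Module ℚ L] (R : RootSystemData L)
    (Δ : Finset L) : Prop :=
  (↑Δ : Set L) ⊆ (R.roots : Set L) ∧
    LinearIndependent ℚ (fun x : (Δ : Set L) => (x : L)) ∧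
    ∀ β ∈ R.roots,
      (∃ c : L → ℕ, β = ∑ α ∈ Δ, (c α : ℚ) • α) ∨
      (∃ c : L → ℕ, β = -(∑ α ∈ Δ, (c α : ℚ) • α))

/-- The closure of the Weyl chamber corresponding to a base `Δ`: the closed
dominant cone of points pairing nonnegatively with all simple coroots. -/
def closedChamber {L : Type*} [AddCommGroup L] [Module ℚ L] (R : RootSystemData L)
    (Δ : Finset L) : Set L :=
  {x | ∀ α ∈ Δ, 0 ≤ R.coroot α x}

/-!
Perturb `l` to a functional `f` that vanishes on no root and is negative wherever `l` is; the
simple roots of the positive system `{f > 0}` then all satisfy `l ≥ 0`. Because distinct simple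
roots pair nonpositively, an invariant-form argument shows that the closed chamber lies in the cone
spanned by the simple roots, so `l ≥ 0` on it. If `l x = 0` for a nonzero `x = ∑ cᵢ αᵢ` in the
chamber, the simple roots with `cᵢ ≠ 0` are orthogonal to the others and span a subspace stable
under all simple reflections, hence under the whole Weyl group; irreducibility then forces them to
be all the simple roots, so `l` vanishes on a basis.
-/

open Module Set Submodule Filter Topology

lemma Module.Dual.exists_forall_ne_zero_and_neg_of_neg {ι M : Type*} [Finite ι] [AddCommGroup M]
    [Module ℚ M] (v : ι → M) (hv : ∀ i, v i ≠ 0) (l : Dual ℚ M) :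
    ∃ f : Dual ℚ M, ∀ i, f (v i) ≠ 0 ∧ (l (v i) < 0 → f (v i) < 0) := by
  obtain ⟨g, hg⟩ := exists_dual_forall_apply_ne_zero (K := ℚ) v hv
  suffices ∀ᶠ t in 𝓝[>] (0 : ℚ), ∀ i, l (v i) + t * g (v i) ≠ 0 ∧
      (l (v i) < 0 → l (v i) + t * g (v i) < 0) by
    obtain ⟨t, ht⟩ := this.exists
    exact ⟨l + t • g, by simpa using ht⟩
  refine eventually_all.mpr fun i ↦ ?_
  have hlim : Tendsto (fun t : ℚ ↦ l (v i) + t * g (v i)) (𝓝[>] 0) (𝓝 (l (v i))) := by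
    refine Tendsto.mono_left ?_ nhdsWithin_le_nhds
    simpa using (tendsto_id.mul_const (g (v i))).const_add (l (v i)) (x := 𝓝 (0 : ℚ))
  rcases lt_trichotomy (l (v i)) 0 with hneg | hzero | hpos
  · filter_upwards [hlim.eventually (gt_mem_nhds hneg)] with t ht
    exact ⟨ht.ne, fun _ ↦ ht⟩
  · filter_upwards [self_mem_nhdsWithin] with t (ht : 0 < t)
    simp [hzero, ht.ne', hg i]
  · filter_upwards [hlim.eventually (lt_mem_nhds hpos)] with t ht
    exact ⟨ht.ne', fun h ↦ absurd h hpos.not_gt⟩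

namespace RootPairing

lemma rootForm_root_self_mul_coroot' {ι R M N : Type*} [Fintype ι] [CommRing R]
    [AddCommGroup M] [Module R M] [AddCommGroup N] [Module R N] (P : RootPairing ι R M N)
    (i : ι) (x : M) :
    P.RootForm (P.root i) (P.root i) * P.coroot' i x = 2 * P.RootForm (P.root i) x := by
  have := congr(P.toLinearMap x $(P.rootForm_self_smul_coroot i))
  simp only [map_smul, map_nsmul, toLinearMap_apply_apply_Polarization, smul_eq_mul,
    nsmul_eq_mul, Nat.cast_ofNat] at this
  exact this

lemma Base.eq_support_of_forall_pairing_eq_zero {ι K M N : Type*} [Finite ι] [Field K] [CharZero K]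
    [AddCommGroup M] [Module K M] [AddCommGroup N] [Module K N] {P : RootPairing ι K M N}
    [P.IsCrystallographic] [P.IsReduced] [P.IsIrreducible] (b : P.Base) {s : Finset ι}
    (hs : s ⊆ b.support) (hs₀ : s.Nonempty)
    (horth : ∀ i ∈ s, ∀ j ∈ b.support, j ∉ s → P.pairing i j = 0) :
    s = b.support := by
  set q := span K (P.root '' s)
  have hq : ∀ j ∈ b.support, q ∈ Module.End.invtSubmodule (P.reflection j) := by
    intro j hj
    by_cases hjs : j ∈ s
    · exact mem_invtSubmodule_reflection_of_mem _ _ (subset_span (mem_image_of_mem _ hjs))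
    · refine (Module.End.mem_invtSubmodule _).mpr fun x hx ↦ ?_
      have hker : q ≤ LinearMap.ker (P.coroot' j) := span_le.mpr <| by
        rintro - ⟨i, hi, rfl⟩
        exact horth i hi j hj hjs
      show P.reflection j x ∈ q
      rwa [reflection_apply, LinearMap.mem_ker.mp (hker hx), zero_smul, sub_zero]
  have hq_top : q = ⊤ := IsIrreducible.eq_top_of_invtSubmodule_reflection q
    ((b.forall_mem_support_invtSubmodule_iff q).mp hq) <| by
      obtain ⟨i, hi⟩ := hs₀
      exact fun h ↦ P.ne_zero i <| (Submodule.eq_bot_iff q).mp h _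
        (subset_span (mem_image_of_mem _ hi))
  by_contra hne
  obtain ⟨j, hj, hjs⟩ := Finset.exists_of_ssubset (Finset.ssubset_iff_subset_ne.mpr ⟨hs, hne⟩)
  have hsj : (s : Set ι) ⊆ b.support \ {j} := fun i hi ↦ ⟨hs hi, fun h ↦ hjs (h ▸ hi)⟩
  exact b.linearIndepOn_root.notMem_span hj <|
    span_mono (image_mono hsj) (show P.root j ∈ q from hq_top ▸ mem_top)

section

variable {ι K M N : Type*} [Fintype ι] [Field K] [LinearOrder K] [IsStrictOrderedRing K]
  [AddCommGroup M] [Module K M] [AddCommGroup N] [Module K N] {P : RootPairing ι K M N}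

lemma zero_le_rootForm_root_of_zero_le_coroot' {i : ι} {x : M} (hx : 0 ≤ P.coroot' i x) :
    0 ≤ P.RootForm (P.root i) x := by
  have := P.rootForm_root_self_mul_coroot' i x
  have := P.zero_le_rootForm (P.root i)
  nlinarith

namespace Base

variable [P.IsCrystallographic] (b : P.Base)

lemma pairing_le_zero_of_ne {i j : ι} (hi : i ∈ b.support) (hj : j ∈ b.support) (hij : i ≠ j) :
    P.pairing i j ≤ 0 := by
  simpa [← P.algebraMap_pairingIn ℤ] using b.pairingIn_le_zero_of_ne hij hi hj

lemma rootForm_root_le_zero_of_ne {i j : ι} (hi : i ∈ b.support) (hj : j ∈ b.support)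
    (hij : i ≠ j) : P.RootForm (P.root i) (P.root j) ≤ 0 := by
  have := P.rootForm_root_self_mul_coroot' i (P.root j)
  rw [root_coroot'_eq_pairing] at this
  have := b.pairing_le_zero_of_ne hj hi hij.symm
  have := P.zero_le_rootForm (P.root i)
  nlinarith

lemma exists_nonneg_coeff_of_coroot'_nonneg [P.IsRootSystem] {x : M}
    (hx : ∀ i ∈ b.support, 0 ≤ P.coroot' i x) :
    ∃ c : ι → K, (∀ i ∈ b.support, 0 ≤ c i) ∧ x = ∑ i ∈ b.support, c i • P.root i := by
  obtain ⟨c, hc⟩ : ∃ c : ι → K, ∑ i ∈ b.support, c i • P.root i = x :=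
    (mem_span_image_finset_iff_exists_fun' K).mp (by simp [b.span_root_support])
  refine ⟨c, fun i hi ↦ ?_, hc.symm⟩
  set B := P.RootForm
  set y := ∑ i ∈ b.support, min (c i) 0 • P.root i
  set z := ∑ i ∈ b.support, max (c i) 0 • P.root i
  -- `x = y + z` with `B y x ≤ 0 ≤ B y z`, so `B y y ≤ 0` kills the negative part `y`.
  have hx_eq : x = y + z := by
    simp only [y, z, ← hc, ← Finset.sum_add_distrib, ← add_smul, min_add_max, add_zero]
  have hyx : B y x ≤ 0 := by
    simp only [y, map_sum, map_smul, LinearMap.sum_apply, LinearMap.smul_apply, smul_eq_mul]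
    exact Finset.sum_nonpos fun i hi ↦ mul_nonpos_of_nonpos_of_nonneg (min_le_right _ _)
      (zero_le_rootForm_root_of_zero_le_coroot' (hx i hi))
  have hyz : 0 ≤ B y z := by
    simp only [y, z, map_sum, map_smul, LinearMap.sum_apply, LinearMap.smul_apply, smul_eq_mul,
      Finset.mul_sum]
    refine Finset.sum_nonneg fun i hi ↦ Finset.sum_nonneg fun j hj ↦ ?_
    rcases eq_or_ne i j with rfl | hij
    · rcases le_total (c i) 0 with h | h <;> simp [h]
    · exact mul_nonneg (le_max_right _ _) (mul_nonneg_of_nonpos_of_nonpos (min_le_right _ _)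
        (b.rootForm_root_le_zero_of_ne hj hi hij.symm))
  have hy : y = 0 := by
    refine P.rootForm_anisotropic y (le_antisymm ?_ (P.zero_le_rootForm y))
    rw [LinearMap.BilinMap.toQuadraticMap_apply]
    rw [hx_eq, map_add] at hyx
    linarith
  simpa using linearIndepOn_finset_iffₛ.mp b.linearIndepOn_root (fun i ↦ min (c i) 0) 0
    (by simpa using hy) i hi

lemma pairing_eq_zero_of_coroot'_sum_nonneg {c : ι → K} (hc : ∀ i ∈ b.support, 0 ≤ c i)
    {j : ι} (hj : j ∈ b.support) (hcj : c j = 0)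
    (hx : 0 ≤ P.coroot' j (∑ i ∈ b.support, c i • P.root i))
    {i : ι} (hi : i ∈ b.support) (hci : c i ≠ 0) : P.pairing i j = 0 := by
  have hterm : ∀ k ∈ b.support, c k * P.pairing k j ≤ 0 := fun k hk ↦ by
    rcases eq_or_ne k j with rfl | hkj
    · simp [hcj]
    · exact mul_nonpos_of_nonneg_of_nonpos (hc k hk) (b.pairing_le_zero_of_ne hk hj hkj)
  simp only [map_sum, map_smul, root_coroot'_eq_pairing, smul_eq_mul] at hx
  have := (Finset.sum_eq_zero_iff_of_nonpos hterm).mp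
    (le_antisymm (Finset.sum_nonpos hterm) hx) i hi
  exact (mul_eq_zero.mp this).resolve_left hci

lemma pos_of_coroot'_nonneg [P.IsRootSystem] [P.IsReduced] [P.IsIrreducible]
    {l : Dual K M} (hl : l ≠ 0) (hlb : ∀ i ∈ b.support, 0 ≤ l (P.root i))
    {x : M} (hx : ∀ i ∈ b.support, 0 ≤ P.coroot' i x) (hx₀ : x ≠ 0) : 0 < l x := by
  classical
  obtain ⟨c, hc, rfl⟩ := b.exists_nonneg_coeff_of_coroot'_nonneg hx
  have hterm : ∀ i ∈ b.support, 0 ≤ c i * l (P.root i) :=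
    fun i hi ↦ mul_nonneg (hc i hi) (hlb i hi)
  simp only [map_sum, map_smul, smul_eq_mul]
  refine (Finset.sum_nonneg hterm).lt_of_ne fun h ↦ hl ?_
  set s := b.support.filter (c · ≠ 0)
  have hs₀ : s.Nonempty := by
    by_contra! hs
    exact hx₀ <| Finset.sum_eq_zero fun i hi ↦ by
      simp [not_not.mp (Finset.filter_eq_empty_iff.mp hs hi)]
  have hs : s = b.support := b.eq_support_of_forall_pairing_eq_zero (Finset.filter_subset _ _) hs₀
    fun i hi j hj hjs ↦ b.pairing_eq_zero_of_coroot'_sum_nonneg hc hj (by simpa [s, hj] using hjs)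
      (hx j hj) (Finset.mem_filter.mp hi).1 (Finset.mem_filter.mp hi).2
  refine LinearMap.ext_on (s := P.root '' b.support) (by simp [b.span_root_support]) ?_
  rintro - ⟨i, hi, rfl⟩
  have hci : c i ≠ 0 := (Finset.mem_filter.mp (show i ∈ s from hs ▸ hi)).2
  simpa [hci] using (Finset.sum_eq_zero_iff_of_nonneg hterm).mp h.symm i hi

end Base

end

lemma exists_base_forall_nonneg {ι M N : Type*} [Finite ι] [AddCommGroup M] [Module ℚ M]
    [AddCommGroup N] [Module ℚ N] (P : RootPairing ι ℚ M N) [P.IsRootSystem]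
    [P.IsCrystallographic] [P.IsReduced] (l : Dual ℚ M) :
    ∃ b : P.Base, ∀ i ∈ b.support, 0 ≤ l (P.root i) := by
  obtain ⟨f, hf⟩ := Dual.exists_forall_ne_zero_and_neg_of_neg P.root (fun i ↦ P.ne_zero i) l
  let := P.indexNeg
  refine ⟨Base.mk' P (IsAddIndecomposable.baseOf P.root (f : M →+ ℚ))
    (P.linearIndepOn_root_baseOf f fun i ↦ (hf i).1)
    fun i ↦ IsAddIndecomposable.mem_or_neg_mem_closure_baseOf P.root (f : M →+ ℚ) i (hf i).1
      (by simp), fun i hi ↦ ?_⟩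
  have : 0 < f (P.root i) :=
    IsAddIndecomposable.baseOf_subset_pos _ _ (by simpa [Base.mk'] using hi)
  exact not_lt.mp fun h ↦ ((hf i).2 h).not_gt this

end RootPairing

namespace RootSystemData

lemma moduleFinite {L : Type*} [AddCommGroup L] [Module ℚ L] (R : RootSystemData L) :
    Module.Finite ℚ L :=
  ⟨⟨R.roots, R.span_eq_top⟩⟩

variable {L : Type*} [AddCommGroup L] [Module ℚ L] (R : RootSystemData L)

lemma mapsTo_preReflection {α : L} (hα : α ∈ R.roots) :
    MapsTo (preReflection α (R.coroot α)) R.roots R.roots :=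
  fun β hβ ↦ R.reflect_mem α hα β hβ

lemma coroot_injOn : InjOn R.coroot R.roots := fun α hα β hβ h ↦
  have : IsAddTorsionFree L := .of_isTorsionFree ℚ L
  eq_of_mapsTo_reflection_of_mem R.roots.finite_toSet (R.coroot_self α hα) (R.coroot_self β hβ)
    (h ▸ R.coroot_self α hα) (h ▸ R.coroot_self β hβ) (R.mapsTo_preReflection hα)
    (h ▸ R.mapsTo_preReflection hβ) hβ

variable [Module.Finite ℚ L]

noncomputable def toRootPairing : RootPairing R.roots ℚ L (Dual ℚ L) :=
  .mk'' (Dual.eval ℚ L) (Function.Embedding.subtype _)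
    ⟨fun α ↦ R.coroot α, fun α β h ↦ Subtype.ext (R.coroot_injOn α.2 β.2 h)⟩
    (fun α ↦ R.coroot_self α α.2)
    (by
      rintro α - ⟨β, rfl⟩
      exact ⟨⟨_, R.reflect_mem α α.2 β β.2⟩, rfl⟩)
    (by simpa using R.span_eq_top)

@[simp] lemma toRootPairing_root (α : R.roots) : R.toRootPairing.root α = α := rfl
@[simp] lemma toRootPairing_coroot (α : R.roots) : R.toRootPairing.coroot α = R.coroot α := rfl
@[simp] lemma toRootPairing_pairing (α β : R.roots) :
    R.toRootPairing.pairing α β = R.coroot β α := rfl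
@[simp] lemma toRootPairing_toLinearMap_apply (x : L) (φ : Dual ℚ L) :
    R.toRootPairing.toLinearMap x φ = φ x := rfl

instance : R.toRootPairing.IsRootSystem := RootPairing.isRootSystem_mk'' fun α β ↦ by
  obtain ⟨n, hn⟩ := R.coroot_int β β.2 α α.2
  exact ⟨n, hn.symm⟩

instance : R.toRootPairing.IsCrystallographic where
  exists_value α β := by
    obtain ⟨n, hn⟩ := R.coroot_int β β.2 α α.2
    exact ⟨n, by simp [hn]⟩

instance : R.toRootPairing.IsReduced where
  eq_or_eq_neg α β h := by
    obtain ⟨c, hc⟩ : ∃ c : ℚ, c • (α : L) = β := by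
      simpa [LinearIndependent.pair_iff' (R.ne_zero α α.2)] using h
    rcases R.reduced α α.2 c (hc ▸ β.2) with rfl | rfl <;> simp [← hc]

instance [Nontrivial L] : R.toRootPairing.IsIrreducible := by
  refine .mk' _ fun q hq hq₀ ↦
    R.toRootPairing.eq_top_of_mem_invtSubmodule_of_forall_eq_univ q hq₀ hq fun Φ hΦ hΦq hker ↦ ?_
  classical
  by_contra hΦ_ne
  obtain ⟨β₀, hβ₀⟩ := (Set.ne_univ_iff_exists_notMem Φ).mp hΦ_ne
  set S := R.roots.filter fun x ↦ ∀ h : x ∈ R.roots, ⟨x, h⟩ ∈ Φ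
  obtain ⟨α₀, hα₀⟩ := hΦ
  obtain ⟨α, hαS, β, hβ, hβS, hαβ⟩ := R.irreducible S (Finset.filter_subset _ _)
    ⟨α₀, by simpa [S] using hα₀⟩ ⟨β₀, β₀.2, by simpa [S] using hβ₀⟩
  simp only [S, Finset.mem_filter] at hαS hβS
  have hα : ⟨α, hαS.1⟩ ∈ Φ := hαS.2 hαS.1
  have hβΦ : ⟨β, hβ⟩ ∉ Φ := by simpa [hβ] using hβS
  have : R.toRootPairing.pairing ⟨α, hαS.1⟩ ⟨β, hβ⟩ = 0 :=
    hker _ hβΦ (hΦq (mem_image_of_mem _ hα))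
  rw [RootPairing.pairing_eq_zero_iff'] at this
  exact hαβ this

def simpleRoots (b : R.toRootPairing.Base) : Finset L :=
  b.support.map (.subtype _)

lemma sum_simpleRoots_smul (b : R.toRootPairing.Base) (f : R.roots → ℕ) :
    ∑ α ∈ R.simpleRoots b, ((Function.extend Subtype.val f 0 α : ℕ) : ℚ) • α =
      ∑ i ∈ b.support, f i • (i : L) := by
  simp [simpleRoots, Nat.cast_smul_eq_nsmul]

lemma isBase_simpleRoots (b : R.toRootPairing.Base) : IsBase R (R.simpleRoots b) := by
  refine ⟨fun α hα ↦ ?_, ?_, fun β hβ ↦ ?_⟩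
  · obtain ⟨i, -, rfl⟩ := Finset.mem_map.mp hα
    exact i.2
  · show LinearIndepOn ℚ id (R.simpleRoots b : Set L)
    rw [simpleRoots, Finset.coe_map]
    exact b.linearIndepOn_root.id_image
  · obtain ⟨f, -, hf | hf⟩ := b.exists_root_eq_sum_nat_or_neg ⟨β, hβ⟩
    · exact .inl ⟨_, (R.sum_simpleRoots_smul b f).symm ▸ hf⟩
    · exact .inr ⟨_, (R.sum_simpleRoots_smul b f).symm ▸ hf⟩

lemma mem_closedChamber_simpleRoots {b : R.toRootPairing.Base} {x : L} :
    x ∈ closedChamber R (R.simpleRoots b) ↔ ∀ i ∈ b.support, 0 ≤ R.toRootPairing.coroot' i x := by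
  simp [closedChamber, simpleRoots]

end RootSystemData

/-- For every nonzero linear function `l` on `L`, there is a Weyl chamber `C`
(given by its base `Δ`) whose closure is contained in `{x | l x ≥ 0}` and meets
`{x | l x = 0}` only at the origin. -/
theorem exists_chamber_strictly_positive {L : Type*} [AddCommGroup L] [Module ℚ L]
    (R : RootSystemData L) (l : L →ₗ[ℚ] ℚ) (hl : l ≠ 0) :
    ∃ Δ : Finset L, IsBase R Δ ∧
      closedChamber R Δ ⊆ {x | 0 ≤ l x} ∧
      closedChamber R Δ ∩ {x | l x = 0} = {0} := by
  have := R.moduleFinite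
  obtain ⟨x₀, hx₀⟩ := DFunLike.ne_iff.mp hl
  have : Nontrivial L := nontrivial_of_ne x₀ 0 fun h ↦ hx₀ (by simp [h])
  obtain ⟨b, hb⟩ := R.toRootPairing.exists_base_forall_nonneg l
  have hpos : ∀ x ∈ closedChamber R (R.simpleRoots b), x ≠ 0 → 0 < l x := fun x hx hx0 ↦
    b.pos_of_coroot'_nonneg hl hb (R.mem_closedChamber_simpleRoots.mp hx) hx0
  refine ⟨R.simpleRoots b, R.isBase_simpleRoots b, fun x hx ↦ ?_, ?_⟩
  · rcases eq_or_ne x 0 with rfl | hx0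
    · simp
    · exact (hpos x hx hx0).le
  · ext x
    refine ⟨fun ⟨hx, hlx⟩ ↦ by_contra fun hx0 ↦ (hpos x hx hx0).ne' hlx, ?_⟩
    rintro rfl
    simp [closedChamber]
end

section
/- Let $\mathcal{M}$ be a finite set of nonempty subsets of a finite-dimensional real vector space $L$ for which the separation property holds, and suppose each $M \in \mathcal{M}$ contains a nonzero point. Then any separating subset $\mathcal{S} \subseteq \mathcal{M}$ has cardinality at least $\dim(L) + 1$; hence $\dim(L) + 1 \leq \operatorname{sep}(\mathcal{M}) \leq |\mathcal{M}|$. -/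
/-- `S` is a separating subset of `𝓜`: for every nonzero linear function `l`
there is a member of `S` at all of whose nonzero points `l` is strictly
positive. -/
def Separating {L : Type*} [AddCommGroup L] [Module ℝ L]
    (𝓜 S : Finset (Set L)) : Prop :=
  S ⊆ 𝓜 ∧ ∀ l : L →ₗ[ℝ] ℝ, l ≠ 0 → ∃ M ∈ S, ∀ x ∈ M, x ≠ 0 → 0 < l x

theorem sep_lower {L : Type*} [AddCommGroup L] [Module ℝ L]
    [FiniteDimensional ℝ L] [Nontrivial L] (𝓜 : Finset (Set L))
    (hne : ∀ M ∈ 𝓜, ∃ x ∈ M, x ≠ (0 : L))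
    (S : Finset (Set L)) (hS : Separating 𝓜 S) :
    Module.finrank ℝ L + 1 ≤ S.card := by
  obtain ⟨hsub, hl⟩ := hS
  by_contra hcard
  push_neg at hcard
  have hcard' : S.card ≤ Module.finrank ℝ L := by omega
  -- choose nonzero points
  choose x hxM hx0 using fun (M : S) => hne M (hsub M.2)
  -- S is nonempty
  have hLdual : ∃ l : L →ₗ[ℝ] ℝ, l ≠ 0 := by
    obtain ⟨v, hv⟩ := exists_ne (0 : L)
    have := (Module.forall_dual_apply_eq_zero_iff ℝ v).not.mpr hv
    push_neg at this
    obtain ⟨l, hlv⟩ := this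
    exact ⟨l, fun h => hlv (by simp [h])⟩
  obtain ⟨l0, hl0⟩ := hLdual
  obtain ⟨M0, hM0, _⟩ := hl l0 hl0
  haveI : Nonempty S := ⟨⟨M0, hM0⟩⟩
  -- the evaluation map
  set φ : (L →ₗ[ℝ] ℝ) →ₗ[ℝ] (S → ℝ) := LinearMap.pi (fun M => LinearMap.applyₗ (x M)) with hφ
  have hφapp : ∀ l M, φ l M = l (x M) := fun l M => rfl
  by_cases hinj : Function.Injective φ
  · have hrank : Module.finrank ℝ (L →ₗ[ℝ] ℝ) = Module.finrank ℝ (S → ℝ) := by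
      have h1 : Module.finrank ℝ (L →ₗ[ℝ] ℝ) = Module.finrank ℝ L := Subspace.dual_finrank_eq
      have h2 : Module.finrank ℝ (S → ℝ) = S.card := by
        simp [Module.finrank_pi, Fintype.card_coe]
      have hle := LinearMap.finrank_le_finrank_of_injective hinj
      omega
    have hsurj : Function.Surjective φ :=
      (LinearMap.injective_iff_surjective_of_finrank_eq_finrank hrank).mp hinj
    obtain ⟨l, hlrep⟩ := hsurj (fun _ => -1)
    have hlne : l ≠ 0 := by
      intro h
      have := congrFun hlrep (Classical.arbitrary S)
      rw [h] at this
      simp [hφapp] at this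
    obtain ⟨M, hM, hpos⟩ := hl l hlne
    have := hpos (x ⟨M, hM⟩) (hxM ⟨M, hM⟩) (hx0 ⟨M, hM⟩)
    have h2 := congrFun hlrep ⟨M, hM⟩
    rw [hφapp] at h2
    rw [h2] at this
    linarith
  · obtain ⟨l, hlne, hl0'⟩ : ∃ l, l ≠ 0 ∧ φ l = 0 := by
      rw [← LinearMap.ker_eq_bot] at hinj
      obtain ⟨l, hlmem, hlne⟩ := Submodule.exists_mem_ne_zero_of_ne_bot hinj
      exact ⟨l, hlne, hlmem⟩
    obtain ⟨M, hM, hpos⟩ := hl l hlne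
    have := hpos (x ⟨M, hM⟩) (hxM ⟨M, hM⟩) (hx0 ⟨M, hM⟩)
    have h2 : φ l ⟨M, hM⟩ = 0 := by rw [hl0']; rfl
    rw [hφapp] at h2
    rw [h2] at this
    exact lt_irrefl 0 this

/-- If the separation property holds for a finite set `𝓜` of subsets of a
finite-dimensional real vector space `L`, each containing a nonzero point, then
every separating subset has cardinality at least `dim L + 1`; hence
`dim L + 1 ≤ sep(𝓜) ≤ |𝓜|`. -/
theorem sep_index_bounds {L : Type*} [AddCommGroup L] [Module ℝ L]
    [FiniteDimensional ℝ L] [Nontrivial L] (𝓜 : Finset (Set L))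
    (hne : ∀ M ∈ 𝓜, ∃ x ∈ M, x ≠ (0 : L))
    (hsep : ∃ S, Separating 𝓜 S) :
    (∀ S, Separating 𝓜 S → Module.finrank ℝ L + 1 ≤ S.card) ∧
      Module.finrank ℝ L + 1 ≤ sInf {m | ∃ S, Separating 𝓜 S ∧ S.card = m} ∧
      sInf {m | ∃ S, Separating 𝓜 S ∧ S.card = m} ≤ 𝓜.card := by
  obtain ⟨S0, hS0⟩ := hsep
  refine ⟨fun S hS => sep_lower 𝓜 hne S hS, ?_, ?_⟩
  · refine le_csInf ⟨S0.card, S0, hS0, rfl⟩ ?_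
    rintro m ⟨S, hS, rfl⟩
    exact sep_lower 𝓜 hne S hS
  · exact le_trans (Nat.sInf_le ⟨S0, hS0, rfl⟩) (Finset.card_le_card hS0.1)
end

section
/- Let $V = V_1 \oplus \cdots \oplus V_n$ where each $V_i$ is a finite-dimensional representation of a torus $T$, let $v_i \in V_i$ be a $T$-weight vector of weight $\mu_i \in X(T)$, and let $v = v_1 + \cdots + v_n$. Then the orbit $T \cdot v$ is closed in $V$ if and only if $0$ lies in the relative interior of $\operatorname{conv}(\{\mu_1, \ldots, \mu_n\})$ in $X(T) \otimes \mathbb{Q}$. -/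
open Finset Filter Topology Matrix

/-!
Let `P ⊆ ℂⁿ` be the image of `(ℂˣ)ʳ` under the monomial map `t ↦ (t ^ μ i)ᵢ`; as `v` has nonzero
coordinates, the orbit of `v` is homeomorphic to `P`.

If `c > 0` and `∑ cᵢ μᵢ = 0`, the continuous function `∏ ‖zᵢ‖ ^ cᵢ` equals `1` on `P`, so the
limit points of `P` lie in `(ℂˣ)ⁿ`. There the polar decomposition `z = ‖z‖ · (z / ‖z‖)` splits
membership in `P` into two closed conditions: the logarithms of the moduli lie in the range of `μ`,
and the phases lie in the (compact) image of the unit torus.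

If there is no such `c`, Hahn–Banach separation of the range of `μ` from the standard simplex gives
`a` with `μ a ≥ 0` and `μ a ≠ 0`; along `s ↦ exp (-s a)` the coordinates with `(μ a)ᵢ > 0` tend
to `0`, so the orbit has a limit point outside it.

Real solutions `c` may be replaced by rational ones since rational solutions of a rational linear
system are dense among the real solutions.
-/

section Rationality

variable {ι κ : Type*} [Fintype ι]

theorem exists_rat_vecMul_eq_zero_mem_nhds (A : Matrix ι κ ℚ) {c : ι → ℝ}
    (hc : c ᵥ* A.map (↑) = 0) {s : Set (ι → ℝ)} (hs : s ∈ 𝓝 c) :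
    ∃ q : ι → ℚ, q ᵥ* A = 0 ∧ (fun i => (q i : ℝ)) ∈ s := by
  let W := Submodule.span ℚ (Set.range c)
  have : FiniteDimensional ℚ W := FiniteDimensional.span_of_finite ℚ (Set.finite_range c)
  let b := Module.finBasis ℚ W
  let e : ι → W := fun i => ⟨c i, Submodule.subset_span (Set.mem_range_self i)⟩
  -- A `ℚ`-linear functional on `W` sends `c` to a rational solution, and such functionals
  -- approximate the inclusion `W → ℝ`: in a basis `b`, the latter sends `b k` to `(b k : ℝ)`.
  have hφ : ∀ φ : W →ₗ[ℚ] ℚ, (fun i => φ (e i)) ᵥ* A = 0 := by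
    intro φ
    funext j
    have hsum : ∑ i, A i j • e i = 0 := by
      ext
      simpa [e, vecMul, dotProduct, Rat.smul_def, mul_comm] using congrFun hc j
    simpa [vecMul, dotProduct, mul_comm] using congrArg φ hsum
  let Φ : (Fin (Module.finrank ℚ W) → ℝ) → ι → ℝ :=
    fun y i => ∑ k, (b.repr (e i) k : ℝ) * y k
  have hΦ : Φ (fun k => (b k : ℝ)) = c := by
    funext i
    have h := congrArg Subtype.val (b.sum_repr (e i))
    simp only [Submodule.coe_sum, Submodule.coe_smul, Rat.smul_def] at h
    exact h
  have hΦs : Φ ⁻¹' s ∈ 𝓝 (fun k => (b k : ℝ)) :=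
    (show Continuous Φ by fun_prop).continuousAt.preimage_mem_nhds (hΦ ▸ hs)
  obtain ⟨_, ⟨q, rfl⟩, hq⟩ :=
    (DenseRange.piMap fun _ => Rat.denseRange_cast (𝕜 := ℝ)).inter_nhds_nonempty hΦs
  refine ⟨fun i => b.constr ℚ q (e i), hφ _, ?_⟩
  have hq' : Φ (fun k => (q k : ℝ)) ∈ s := hq
  convert hq' using 1
  funext i
  simp [Φ, Module.Basis.constr_apply_fintype]

theorem exists_pos_rat_vecMul_eq_zero_iff (A : Matrix ι κ ℚ) :
    (∃ q : ι → ℚ, (∀ i, 0 < q i) ∧ q ᵥ* A = 0) ↔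
      ∃ c : ι → ℝ, (∀ i, 0 < c i) ∧ c ᵥ* A.map (↑) = 0 := by
  constructor
  · rintro ⟨q, hq, hqA⟩
    refine ⟨fun i => q i, fun i => Rat.cast_pos.2 (hq i), funext fun j => ?_⟩
    simpa [hqA, Function.comp_def, eq_comm] using (Rat.castHom ℝ).map_vecMul A q j
  · rintro ⟨c, hc, hcA⟩
    obtain ⟨q, hqA, hq⟩ := exists_rat_vecMul_eq_zero_mem_nhds A hcA
      (eventually_all.2 fun i => (continuous_apply i).continuousAt.eventually (lt_mem_nhds (hc i)))
    exact ⟨q, fun i => Rat.cast_pos.1 (hq i), hqA⟩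

end Rationality

theorem exists_pos_sum_eq_one_vecMul_eq_zero_iff {ι κ 𝕜 : Type*} [Fintype ι] [Nonempty ι]
    [Field 𝕜] [LinearOrder 𝕜] [IsStrictOrderedRing 𝕜] (A : Matrix ι κ 𝕜) :
    (∃ c : ι → 𝕜, (∀ i, 0 < c i) ∧ ∑ i, c i = 1 ∧ c ᵥ* A = 0) ↔
      ∃ c : ι → 𝕜, (∀ i, 0 < c i) ∧ c ᵥ* A = 0 := by
  refine ⟨fun ⟨c, hc, _, hcA⟩ => ⟨c, hc, hcA⟩, fun ⟨c, hc, hcA⟩ => ?_⟩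
  have hsum : 0 < ∑ i, c i := Finset.sum_pos (fun i _ => hc i) univ_nonempty
  refine ⟨(∑ i, c i)⁻¹ • c, fun i => mul_pos (inv_pos.2 hsum) (hc i), ?_, ?_⟩
  · simp [← Finset.mul_sum, hsum.ne']
  · rw [smul_vecMul, hcA, smul_zero]

theorem exists_pos_dotProduct_eq_zero_of_disjoint {ι : Type*} [Fintype ι]
    (U : Submodule ℝ (ι → ℝ)) (hU : Disjoint (U : Set (ι → ℝ)) (stdSimplex ℝ ι)) :
    ∃ c : ι → ℝ, (∀ i, 0 < c i) ∧ ∀ x ∈ U, c ⬝ᵥ x = 0 := by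
  classical
  obtain ⟨f, u, w, hfU, huw, hfw⟩ := geometric_hahn_banach_closed_compact U.convex
    U.closed_of_finiteDimensional (convex_stdSimplex ℝ ι) (isCompact_stdSimplex ℝ ι) hU
  have hf : ∀ x ∈ U, f x = 0 := by
    intro x hx
    by_contra hfx
    have := hfU _ (U.smul_mem (u / f x) hx)
    rw [map_smul, smul_eq_mul, div_mul_cancel₀ _ hfx] at this
    exact this.false
  have hu : 0 < u := by simpa using hfU 0 U.zero_mem
  refine ⟨fun i => f (Pi.single i 1),
    fun i => hu.trans (huw.trans (hfw _ (single_mem_stdSimplex ℝ i))), fun x hx => ?_⟩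
  rw [← hf x hx]
  conv_rhs => rw [← univ_sum_single x]
  simp only [map_sum, dotProduct, mul_comm]
  refine Finset.sum_congr rfl fun i _ => ?_
  rw [← smul_eq_mul, ← map_smul, ← Pi.single_smul', smul_eq_mul, mul_one]

section MonomialMap

variable {ι κ : Type*} [Fintype κ] (μ : Matrix ι κ ℤ)

noncomputable def monomialMap (t : κ → ℂ) : ι → ℂ := fun i => ∏ j, t j ^ μ i j

theorem monomialMap_mul (s t : κ → ℂ) :
    monomialMap μ (s * t) = monomialMap μ s * monomialMap μ t := by
  funext i
  simp [monomialMap, mul_zpow, prod_mul_distrib]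

theorem monomialMap_ne_zero {t : κ → ℂ} (ht : ∀ j, t j ≠ 0) (i : ι) : monomialMap μ t i ≠ 0 :=
  prod_ne_zero_iff.2 fun j _ => zpow_ne_zero _ (ht j)

theorem monomialMap_ofReal_exp (a : κ → ℝ) :
    monomialMap μ (fun j => (Real.exp (a j) : ℂ)) =
      fun i => (Real.exp ((μ.map (↑) *ᵥ a) i) : ℂ) := by
  funext i
  simp [monomialMap, mulVec, dotProduct, Complex.ofReal_exp, ← Complex.exp_int_mul,
    ← Complex.exp_sum]

theorem log_norm_monomialMap {t : κ → ℂ} (ht : ∀ j, t j ≠ 0) :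
    (fun i => Real.log ‖monomialMap μ t i‖) = μ.map (↑) *ᵥ fun j => Real.log ‖t j‖ := by
  funext i
  rw [monomialMap, norm_prod, Real.log_prod fun j _ => norm_ne_zero_iff.2 (zpow_ne_zero _ (ht j))]
  simp [mulVec, dotProduct, Real.log_zpow]

theorem monomialMap_div_norm (t : κ → ℂ) :
    monomialMap μ (fun j => t j / ‖t j‖) = fun i => monomialMap μ t i / ‖monomialMap μ t i‖ := by
  funext i
  simp [monomialMap, div_zpow, prod_div_distrib, norm_prod]

theorem continuousOn_monomialMap : ContinuousOn (monomialMap μ) {t | ∀ j, t j ≠ 0} :=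
  continuousOn_pi.2 fun _ => continuousOn_finsetProd _ fun j _ =>
    (continuous_apply j).continuousOn.zpow₀ _ fun _ ht => Or.inl (ht j)

variable {μ}

theorem ne_zero_of_mem_closure_image_monomialMap [Fintype ι] {c : ι → ℝ} (hc : ∀ i, 0 < c i)
    (hcμ : c ᵥ* μ.map (↑) = 0) {x : ι → ℂ}
    (hx : x ∈ closure (monomialMap μ '' {t | ∀ j, t j ≠ 0})) (i : ι) : x i ≠ 0 := by
  let F : (ι → ℂ) → ℝ := fun z => ∏ i, ‖z i‖ ^ c i
  have hF : Continuous F := continuous_finsetProd _ fun i _ =>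
    (Real.continuous_rpow_const (hc i).le).comp (continuous_norm.comp (continuous_apply i))
  have hFP : ∀ z ∈ monomialMap μ '' {t | ∀ j, t j ≠ 0}, F z = 1 := by
    rintro _ ⟨t, ht, rfl⟩
    calc F (monomialMap μ t) = Real.exp (c ⬝ᵥ fun i => Real.log ‖monomialMap μ t i‖) := by
          simp only [F, dotProduct, Real.exp_sum, mul_comm (c _)]
          exact prod_congr rfl fun i _ =>
            Real.rpow_def_of_pos (norm_pos_iff.2 (monomialMap_ne_zero μ ht i)) _
      _ = 1 := by
          rw [log_norm_monomialMap μ ht, dotProduct_mulVec, hcμ, zero_dotProduct, Real.exp_zero]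
  have hFx : F x = 1 := (isClosed_eq hF continuous_const).closure_subset_iff.2 hFP hx
  intro hxi
  have : F x = 0 := prod_eq_zero (mem_univ i) (by simp [hxi, Real.zero_rpow (hc i).ne'])
  exact one_ne_zero (hFx.symm.trans this)

theorem mem_image_monomialMap_of_mem_closure {x : ι → ℂ}
    (hx : x ∈ closure (monomialMap μ '' {t | ∀ j, t j ≠ 0})) (hx0 : ∀ i, x i ≠ 0) :
    x ∈ monomialMap μ '' {t | ∀ j, t j ≠ 0} := by
  obtain ⟨a, ha⟩ :
      (fun i => Real.log ‖x i‖) ∈ LinearMap.range (μ.map (↑) : Matrix ι κ ℝ).mulVecLin := by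
    refine closure_minimal ?_ (Submodule.closed_of_finiteDimensional _)
      (mem_closure_image (f := fun (z : ι → ℂ) i => Real.log ‖z i‖)
        (continuousAt_pi.2 fun i => ?_) hx)
    · rintro _ ⟨_, ⟨t, ht, rfl⟩, rfl⟩
      exact ⟨_, (log_norm_monomialMap μ ht).symm⟩
    · exact (continuous_apply i).norm.continuousAt.log (norm_ne_zero_iff.2 (hx0 i))
  let S : Set (κ → ℂ) := Set.univ.pi fun _ => Metric.sphere 0 1
  have hS : S ⊆ {t | ∀ j, t j ≠ 0} := fun t ht j =>
    ne_zero_of_mem_unit_sphere ⟨t j, ht j trivial⟩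
  obtain ⟨u, hu, hux⟩ : (fun i => x i / ‖x i‖) ∈ monomialMap μ '' S := by
    refine closure_minimal ?_
      ((isCompact_univ_pi fun _ => isCompact_sphere 0 1).image_of_continuousOn
        ((continuousOn_monomialMap μ).mono hS)).isClosed
      (mem_closure_image (f := fun (z : ι → ℂ) i => z i / (‖z i‖ : ℂ))
        (continuousAt_pi.2 fun i => ?_) hx)
    · rintro _ ⟨_, ⟨t, ht, rfl⟩, rfl⟩
      refine ⟨fun j => t j / ‖t j‖, fun j _ => ?_, monomialMap_div_norm μ t⟩
      simp [ht j]
    · exact (continuous_apply i).continuousAt.div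
        (Complex.continuous_ofReal.comp (continuous_apply i).norm).continuousAt
        (Complex.ofReal_ne_zero.2 (norm_ne_zero_iff.2 (hx0 i)))
  refine ⟨(fun j => (Real.exp (a j) : ℂ)) * u, fun j => mul_ne_zero (by simp) (hS hu j), ?_⟩
  rw [mulVecLin_apply] at ha
  rw [monomialMap_mul, monomialMap_ofReal_exp, hux, ha]
  funext i
  rw [Pi.mul_apply, Real.exp_log (norm_pos_iff.2 (hx0 i)),
    mul_div_cancel₀ _ (Complex.ofReal_ne_zero.2 (norm_ne_zero_iff.2 (hx0 i)))]

theorem not_isClosed_image_monomialMap {a : κ → ℝ} (ha : 0 ≤ μ.map (↑) *ᵥ a)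
    (ha' : μ.map (↑) *ᵥ a ≠ 0) : ¬IsClosed (monomialMap μ '' {t | ∀ j, t j ≠ 0}) := by
  set y := μ.map (↑) *ᵥ a with hy
  let w : ι → ℂ := fun i => if y i = 0 then 1 else 0
  have hlim : Tendsto (fun s : ℝ => monomialMap μ fun j => (Real.exp (((-s) • a) j) : ℂ))
      atTop (𝓝 w) := by
    simp only [monomialMap_ofReal_exp, mulVec_smul, ← hy]
    refine tendsto_pi_nhds.2 fun i => ?_
    by_cases hyi : y i = 0
    · simp [w, hyi]
    · have hpos : 0 < y i := (ha i).lt_of_ne' hyi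
      have := (Real.tendsto_exp_neg_atTop_nhds_zero.comp
        (tendsto_id.atTop_mul_const hpos)).ofReal
      simpa [w, hyi, Function.comp_def] using this
  intro hclosed
  have hw := hclosed.closure_subset (mem_closure_of_tendsto hlim
    (Eventually.of_forall fun s => ⟨_, fun j => by simp, rfl⟩))
  obtain ⟨i, hi⟩ : ∃ i, y i ≠ 0 := Function.ne_iff.1 ha'
  obtain ⟨t, ht, htw⟩ := hw
  exact monomialMap_ne_zero μ ht i (by simp [htw, w, hi])

theorem isClosed_image_monomialMap_iff [Fintype ι] :
    IsClosed (monomialMap μ '' {t | ∀ j, t j ≠ 0}) ↔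
      ∃ c : ι → ℝ, (∀ i, 0 < c i) ∧ c ᵥ* μ.map (↑) = 0 := by
  constructor
  · intro hP
    by_contra hc
    have hU : ¬Disjoint (LinearMap.range (μ.map (↑) : Matrix ι κ ℝ).mulVecLin : Set (ι → ℝ))
        (stdSimplex ℝ ι) := fun hU => hc <| by
      obtain ⟨c, hc, hcU⟩ := exists_pos_dotProduct_eq_zero_of_disjoint _ hU
      exact ⟨c, hc, dotProduct_eq_zero _ fun a => dotProduct_mulVec c _ a ▸ hcU _ ⟨a, rfl⟩⟩
    obtain ⟨_, ⟨a, rfl⟩, hpos, hsum⟩ := Set.not_disjoint_iff.1 hU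
    refine not_isClosed_image_monomialMap hpos (fun h0 => ?_) hP
    simp [h0] at hsum
  · rintro ⟨c, hc, hcμ⟩
    exact closure_subset_iff_isClosed.1 fun x hx => mem_image_monomialMap_of_mem_closure hx
      (ne_zero_of_mem_closure_image_monomialMap hc hcμ hx)

def torusOrbit (μ : Matrix ι κ ℤ) (v : ι → ℂ) : Set (ι → ℂ) :=
  {w | ∃ t : κ → ℂˣ, ∀ i, w i = (∏ j, (t j : ℂ) ^ μ i j) * v i}

theorem mem_torusOrbit_iff {v : ι → ℂ} (hv : ∀ i, v i ≠ 0) {w : ι → ℂ} :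
    w ∈ torusOrbit μ v ↔ w / v ∈ monomialMap μ '' {t | ∀ j, t j ≠ 0} := by
  constructor
  · rintro ⟨t, ht⟩
    exact ⟨fun j => t j, fun j => (t j).ne_zero, funext fun i => by simp [monomialMap, ht i, hv i]⟩
  · rintro ⟨t, ht, htw⟩
    refine ⟨fun j => Units.mk0 (t j) (ht j), fun i => ?_⟩
    have hi := congrFun htw i
    simp only [monomialMap, Pi.div_apply] at hi
    simp [hi, div_mul_cancel₀ _ (hv i)]

theorem isClosed_torusOrbit_iff {v : ι → ℂ} (hv : ∀ i, v i ≠ 0) :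
    IsClosed (torusOrbit μ v) ↔ IsClosed (monomialMap μ '' {t | ∀ j, t j ≠ 0}) := by
  have horbit : torusOrbit μ v = (· / v) ⁻¹' (monomialMap μ '' {t | ∀ j, t j ≠ 0}) :=
    Set.ext fun w => mem_torusOrbit_iff hv
  have himage : monomialMap μ '' {t | ∀ j, t j ≠ 0} = (· * v) ⁻¹' torusOrbit μ v := by
    ext x
    rw [Set.mem_preimage, mem_torusOrbit_iff hv,
      show x * v / v = x from funext fun i => mul_div_cancel_right₀ _ (hv i)]
  exact ⟨fun h => himage ▸ h.preimage (continuous_mul_const v),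
    fun h => horbit ▸ h.preimage (continuous_id.div_const v)⟩

end MonomialMap

/-- Let the torus `T = (ℂˣ)^r` act diagonally on `V = ℂ^n`, the `i`-th
coordinate line being a weight space of weight `μ i : Fin r → ℤ`, and let
`v = (v 1, …, v n)` be a sum of nonzero weight vectors.  Then the orbit `T ⬝ v`
is closed in `V` if and only if `0` lies in the relative interior of the convex
hull of `{μ 1, …, μ n}`, i.e. `0` is a convex combination of the weights with
all coefficients strictly positive. -/
theorem torus_orbit_closed_iff_zero_mem_relint {r n : ℕ} (hn : 0 < n)
    (μ : Fin n → Fin r → ℤ) (v : Fin n → ℂ) (hv : ∀ i, v i ≠ 0) :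
    IsClosed {w : Fin n → ℂ |
        ∃ t : Fin r → ℂˣ, ∀ i, w i = (∏ j, (t j : ℂ) ^ μ i j) * v i} ↔
      ∃ c : Fin n → ℚ, (∀ i, 0 < c i) ∧ ∑ i, c i = 1 ∧
        ∀ j, ∑ i, c i * (μ i j : ℚ) = 0 := by
  have : Nonempty (Fin n) := ⟨⟨0, hn⟩⟩
  have hvecMul : ∀ c : Fin n → ℚ,
      (∀ j, ∑ i, c i * (μ i j : ℚ) = 0) ↔ c ᵥ* (Matrix.of μ).map (↑) = 0 := fun c =>
    funext_iff.symm
  simp_rw [hvecMul]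
  rw [exists_pos_sum_eq_one_vecMul_eq_zero_iff, exists_pos_rat_vecMul_eq_zero_iff, Matrix.map_map,
    show ((↑) : ℚ → ℝ) ∘ ((↑) : ℤ → ℚ) = (↑) from funext Rat.cast_intCast]
  exact (isClosed_torusOrbit_iff hv).trans isClosed_image_monomialMap_iff
end
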